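/- Let X, Y be independent standard normal random variables (correlation ρ = 0). Then for any w > 0, the collision probability P(⌊X/w⌋ = ⌊Y/w⌋) = 2 ∑_{i=0}^∞ (Φ((i+1)w) - Φ(iw))² , and this quantity is strictly less than 1/2 + (Φ(w) - 1/2)², and converges to 1/2 as w → ∞. -/

import Mathlib

open MeasureTheory ProbabilityTheory Real Set

/-- Standard normal density. -/
noncomputable def stdPdf (x : ℝ) : ℝ := (Real.sqrt (2 * Real.pi))⁻¹ * Real.exp (-x ^ 2 / 2)

/-- Standard normal CDF. -/
noncomputable def Phi (x : ℝ) : ℝ := ∫ t in Set.Iic x, stdPdf t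

/-!
The collision event is the disjoint union over `i ∈ ℤ` of the squares `Cᵢ × Cᵢ`,
`Cᵢ = [i w, (i + 1) w)`, so its probability is `∑ᵢ μ(Cᵢ)²`, and the symmetry `x ↦ -x` of the
Gaussian pairs `C₋ᵢ₋₁` with `Cᵢ`. The masses `pₙ = μ(Cₙ)`, `n ≥ 0`, sum to `1/2`, and since the
density decreases on `[0, ∞)` they are all at most `p₀ = Φ(w) - 1/2`. Hence
`2 p₀² ≤ 2 ∑ pₙ² ≤ p₀`, and `p₀ < 1/2 + p₀²` always, while both bounds tend to `1/2` with `p₀`.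
-/

open Filter Topology

lemma hasSum_sub_of_monotone_of_tendsto {f : ℕ → ℝ} {l : ℝ} (hf : Monotone f)
    (hl : Tendsto f atTop (𝓝 l)) : HasSum (fun n ↦ f (n + 1) - f n) (l - f 0) := by
  rw [hasSum_iff_tendsto_nat_of_nonneg (fun n ↦ sub_nonneg.2 (hf n.le_succ))]
  simpa only [Finset.sum_range_sub] using hl.sub_const (f 0)

section SquareSum

variable {p : ℕ → ℝ} {c : ℝ}

lemma summable_sq_of_le (hp : Summable p) (h0 : ∀ n, 0 ≤ p n) (hc : ∀ n, p n ≤ c) :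
    Summable fun n ↦ p n ^ 2 :=
  (hp.mul_left c).of_nonneg_of_le (fun _ ↦ sq_nonneg _)
    fun n ↦ (sq (p n)).trans_le (mul_le_mul_of_nonneg_right (hc n) (h0 n))

lemma tsum_sq_le_mul_of_le {s : ℝ} (hp : HasSum p s) (h0 : ∀ n, 0 ≤ p n) (hc : ∀ n, p n ≤ c) :
    ∑' n, p n ^ 2 ≤ c * s := by
  rw [← hp.tsum_eq, ← tsum_mul_left]
  exact (summable_sq_of_le hp.summable h0 hc).tsum_le_tsum
    (fun n ↦ (sq (p n)).trans_le (mul_le_mul_of_nonneg_right (hc n) (h0 n)))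
    (hp.summable.mul_left c)

end SquareSum

theorem prod_setOf_eq_eq_tsum {α ι : Type*} [MeasurableSpace α] [MeasurableSpace ι]
    [Countable ι] [MeasurableSingletonClass ι] (μ ν : Measure α) [SFinite ν] {f : α → ι}
    (hf : Measurable f) :
    μ.prod ν {p | f p.1 = f p.2} = ∑' i, μ (f ⁻¹' {i}) * ν (f ⁻¹' {i}) := by
  have hU : {p : α × α | f p.1 = f p.2} = ⋃ i, (f ⁻¹' {i}) ×ˢ (f ⁻¹' {i}) := by
    ext p; simp [eq_comm]
  rw [hU, measure_iUnion]
  · simp_rw [Measure.prod_prod]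
  · exact fun i j hij ↦ ((pairwise_disjoint_fiber f hij).set_prod_left _ _)
  · exact fun i ↦ (hf (measurableSet_singleton i)).prod (hf (measurableSet_singleton i))

lemma preimage_floor_div {w : ℝ} (hw : 0 < w) (i : ℤ) :
    (fun x : ℝ ↦ ⌊x / w⌋) ⁻¹' {i} = Ico (i * w) ((i + 1) * w) := by
  ext x
  simp only [mem_preimage, mem_singleton_iff, Int.floor_eq_iff, mem_Ico, le_div_iff₀ hw,
    div_lt_iff₀ hw]

lemma hasSum_cdf_increments (μ : Measure ℝ) [IsProbabilityMeasure μ] {w : ℝ} (hw : 0 < w) :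
    HasSum (fun n : ℕ ↦ cdf μ ((n + 1) * w) - cdf μ (n * w)) (1 - cdf μ 0) := by
  have hmono : Monotone fun n : ℕ ↦ cdf μ (n * w) :=
    monotone_cdf μ |>.comp fun m n hmn ↦ by gcongr
  have hlim : Tendsto (fun n : ℕ ↦ cdf μ (n * w)) atTop (𝓝 1) :=
    (tendsto_cdf_atTop μ).comp (tendsto_natCast_atTop_atTop.atTop_mul_const hw)
  simpa using hasSum_sub_of_monotone_of_tendsto hmono hlim

section Atomless

variable {μ : Measure ℝ} [NullSingletonClass μ]

lemma measureReal_Ico_eq_cdf_sub [IsProbabilityMeasure μ] {a b : ℝ} (hab : a ≤ b) :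
    μ.real (Ico a b) = cdf μ b - cdf μ a := by
  rw [measureReal_congr Ico_ae_eq_Ioc, ← Iic_sdiff_Iic,
    measureReal_sdiff (Iic_subset_Iic.2 hab) measurableSet_Iic, cdf_eq_real, cdf_eq_real]

lemma measure_Ico_neg [μ.IsNegInvariant] (a b : ℝ) : μ (Ico (-b) (-a)) = μ (Ico a b) := by
  rw [← Measure.measure_neg, neg_Ico, neg_neg, neg_neg]
  exact measure_congr Ico_ae_eq_Ioc.symm

lemma cdf_zero_of_isNegInvariant [IsProbabilityMeasure μ] [μ.IsNegInvariant] :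
    cdf μ 0 = 1 / 2 := by
  have h : μ.real (Iic 0) = μ.real (Ioi 0) := by
    rw [measureReal_def, measureReal_def, ← Measure.measure_neg, neg_Iic, neg_zero,
      measure_congr Ioi_ae_eq_Ici]
  have hc := probReal_compl_eq_one_sub (μ := μ) (measurableSet_Iic (a := (0 : ℝ)))
  rw [compl_Iic, ← h] at hc
  rw [cdf_eq_real]
  linarith

theorem toReal_prod_setOf_floor_div_eq [IsProbabilityMeasure μ] [μ.IsNegInvariant] {w : ℝ}
    (hw : 0 < w) :
    ((μ.prod μ) {p : ℝ × ℝ | ⌊p.1 / w⌋ = ⌊p.2 / w⌋}).toReal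
      = 2 * ∑' n : ℕ, (cdf μ ((n + 1) * w) - cdf μ (n * w)) ^ 2 := by
  have hcell_neg (n : ℕ) : μ ((fun x ↦ ⌊x / w⌋) ⁻¹' {-(n + 1 : ℤ)})
      = μ ((fun x ↦ ⌊x / w⌋) ⁻¹' {(n : ℤ)}) := by
    rw [preimage_floor_div hw, preimage_floor_div hw, ← measure_Ico_neg]
    congr 2 <;> push_cast <;> ring
  rw [prod_setOf_eq_eq_tsum μ μ (measurable_div_const w).floor,
    tsum_of_nat_of_neg_add_one ENNReal.summable ENNReal.summable]
  simp_rw [hcell_neg, ← two_mul, ← sq]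
  rw [ENNReal.toReal_mul, ENNReal.tsum_toReal_eq (fun n ↦ by finiteness)]
  congr 2 with n
  rw [ENNReal.toReal_pow, ← measureReal_def, preimage_floor_div hw,
    measureReal_Ico_eq_cdf_sub (by gcongr; linarith)]
  norm_cast

end Atomless

instance : NullSingletonClass (gaussianReal 0 1) := nullSingletonClass_gaussianReal one_ne_zero

instance isNegInvariant_gaussianReal (v : NNReal) : (gaussianReal 0 v).IsNegInvariant :=
  ⟨by rw [Measure.neg_def, gaussianReal_map_neg, neg_zero]⟩

lemma stdPdf_eq_gaussianPDFReal : stdPdf = gaussianPDFReal 0 1 := by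
  ext x; simp [stdPdf, gaussianPDFReal]

lemma Phi_eq_cdf : Phi = cdf (gaussianReal 0 1) := by
  ext x
  rw [cdf_eq_real, measureReal_def, gaussianReal_apply_eq_integral 0 one_ne_zero,
    ENNReal.toReal_ofReal (integral_nonneg fun t ↦ gaussianPDFReal_nonneg _ _ _), Phi,
    stdPdf_eq_gaussianPDFReal]

lemma monotone_Phi : Monotone Phi :=
  Phi_eq_cdf ▸ monotone_cdf _

lemma Phi_zero : Phi 0 = 1 / 2 := by
  rw [Phi_eq_cdf, cdf_zero_of_isNegInvariant]

lemma stdPdf_antitoneOn : AntitoneOn stdPdf (Ici 0) := by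
  intro x hx y _ hxy
  unfold stdPdf
  gcongr

lemma integrable_stdPdf : Integrable stdPdf :=
  stdPdf_eq_gaussianPDFReal ▸ integrable_gaussianPDFReal 0 1

lemma Phi_sub_Phi_eq_integral (a b : ℝ) : Phi b - Phi a = ∫ x in a..b, stdPdf x :=
  intervalIntegral.integral_Iic_sub_Iic integrable_stdPdf.integrableOn
    integrable_stdPdf.integrableOn

lemma Phi_add_sub_le {c w : ℝ} (hc : 0 ≤ c) (hw : 0 ≤ w) :
    Phi (c + w) - Phi c ≤ Phi w - Phi 0 := by
  rw [Phi_sub_Phi_eq_integral, Phi_sub_Phi_eq_integral]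
  calc ∫ x in c..c + w, stdPdf x = ∫ x in 0..w, stdPdf (x + c) := by
        rw [intervalIntegral.integral_comp_add_right, zero_add, add_comm]
    _ ≤ ∫ x in 0..w, stdPdf x :=
      intervalIntegral.integral_mono_on hw (integrable_stdPdf.comp_add_right c).intervalIntegrable
        integrable_stdPdf.intervalIntegrable fun x hx ↦
          stdPdf_antitoneOn hx.1 (le_add_of_le_of_nonneg hx.1 hc) (le_add_of_nonneg_right hc)

lemma tsum_sq_Phi_increments_bounds {w : ℝ} (hw : 0 < w) :
    (Phi w - 1 / 2) ^ 2 ≤ ∑' n : ℕ, (Phi ((n + 1) * w) - Phi (n * w)) ^ 2 ∧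
      2 * ∑' n : ℕ, (Phi ((n + 1) * w) - Phi (n * w)) ^ 2 ≤ Phi w - 1 / 2 := by
  set p : ℕ → ℝ := fun n ↦ Phi ((n + 1) * w) - Phi (n * w)
  have hp : HasSum p (1 / 2) := by
    have h := hasSum_cdf_increments (gaussianReal 0 1) hw
    rwa [← Phi_eq_cdf, Phi_zero, (by norm_num : (1 : ℝ) - 1 / 2 = 1 / 2)] at h
  have hp0 : p 0 = Phi w - 1 / 2 := by simp [p, Phi_zero]
  have h0 (n : ℕ) : 0 ≤ p n := sub_nonneg.2 (monotone_Phi (by gcongr; linarith))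
  have hle (n : ℕ) : p n ≤ Phi w - 1 / 2 := by
    simp only [p, ← Phi_zero]
    convert Phi_add_sub_le (c := n * w) (by positivity) hw.le using 3
    ring
  refine ⟨hp0 ▸ (summable_sq_of_le hp.summable h0 hle).le_tsum 0 fun n _ ↦ sq_nonneg _, ?_⟩
  linarith [tsum_sq_le_mul_of_le hp h0 hle]

/-- For independent standard normals, the collision probability of uniform quantization
is 2∑(Φ((i+1)w)-Φ(iw))², which is < 1/2 + (Φ(w)-1/2)² and tends to 1/2 as w → ∞. -/
theorem stmt2 :
    (∀ w : ℝ, 0 < w →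
      (((gaussianReal 0 1).prod (gaussianReal 0 1))
          {p : ℝ × ℝ | ⌊p.1 / w⌋ = ⌊p.2 / w⌋}).toReal
        = 2 * ∑' i : ℕ, (Phi (((i : ℝ) + 1) * w) - Phi ((i : ℝ) * w)) ^ 2) ∧
    (∀ w : ℝ, 0 < w →
      2 * ∑' i : ℕ, (Phi (((i : ℝ) + 1) * w) - Phi ((i : ℝ) * w)) ^ 2
        < 1 / 2 + (Phi w - 1 / 2) ^ 2) ∧
    Filter.Tendsto
      (fun w : ℝ => 2 * ∑' i : ℕ, (Phi (((i : ℝ) + 1) * w) - Phi ((i : ℝ) * w)) ^ 2)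
      Filter.atTop (nhds (1 / 2)) := by
  refine ⟨fun w hw ↦ ?_, fun w hw ↦ ?_, ?_⟩
  · rw [Phi_eq_cdf]
    exact toReal_prod_setOf_floor_div_eq hw
  · nlinarith [(tsum_sq_Phi_increments_bounds hw).2, sq_nonneg (Phi w - 1)]
  · have hq : Tendsto (fun w ↦ Phi w - 1 / 2) atTop (𝓝 (1 / 2)) := by
      rw [Phi_eq_cdf]
      convert (tendsto_cdf_atTop (gaussianReal 0 1)).sub_const (1 / 2) using 2
      norm_num
    have hq2 : Tendsto (fun w ↦ 2 * (Phi w - 1 / 2) ^ 2) atTop (𝓝 (1 / 2)) := by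
      convert (hq.pow 2).const_mul 2 using 2
      norm_num
    refine tendsto_of_tendsto_of_tendsto_of_le_of_le' hq2 hq ?_ ?_ <;>
      filter_upwards [eventually_gt_atTop 0] with w hw
    · linarith [(tsum_sq_Phi_increments_bounds hw).1]
    · exact (tsum_sq_Phi_increments_bounds hw).2
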